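/- Let τ ≥ 1 be an integer and let a, b : {1, …, τ} → ℝ with a(j), b(j) ∈ {0,1} for all j. Let H_U ⊆ ℝ^{2τ} be the H-rep polytope {v ∈ ℝ^{2τ} : [L₁ L₂] v ≤ (0, …, 0, −1)ᵀ}, where (L₁)_{i,j} = −1/i for 1 ≤ i ≤ τ−1, 1 ≤ j ≤ i and 0 otherwise (last row of L₁ zero), and (L₂)_{i,j} = −1 for 1 ≤ j ≤ i, (L₂)_{i,i+1} = 1 for 1 ≤ i ≤ τ−1, and 0 otherwise (last row of L₂ all −1). Then (a(1), …, a(τ), b(1), …, b(τ)) ∈ H_U if and only if there exists t ∈ {1, …, τ} such that b(t) = 1 and a(t') = 1 for all 1 ≤ t' < t. -/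

import Mathlib

/-!
Write `τ = n + 1`. For `k < n`, row `k` of the system says
`b (k+1) ≤ ∑_{j ≤ k} b j + (∑_{j ≤ k} a j) / (k + 1)`. For `0/1` data the average of
`a` over `0, …, k` is at least `1` exactly when all these `a j` equal `1`, so row `k` reads:
if `φ₂` holds at `k + 1` but not before, then `φ₁` holds at `0, …, k`. The last row says that
`φ₂` holds somewhere. Applied at the first step where `φ₂` holds, the rows give `φ₁ U φ₂`;
conversely a witness `t` of `φ₁ U φ₂` satisfies every row, through `b t` when `t ≤ k` and
through the average of `a` when `k < t`.
-/

open Finset Matrix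

section BinarySums

variable {ι : Type*} {s : Finset ι}

theorem Finset.one_le_sum_iff_exists_eq_one {f : ι → ℝ} (hf : ∀ i ∈ s, f i = 0 ∨ f i = 1) :
    1 ≤ ∑ i ∈ s, f i ↔ ∃ i ∈ s, f i = 1 := by
  constructor
  · intro h
    by_contra! hne
    have : ∑ i ∈ s, f i = 0 := sum_eq_zero fun i hi => (hf i hi).resolve_right (hne i hi)
    linarith
  · rintro ⟨i, hi, hfi⟩
    have hf₀ : ∀ j ∈ s, 0 ≤ f j := fun j hj => by rcases hf j hj with h | h <;> simp [h]
    exact hfi ▸ single_le_sum hf₀ hi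

theorem Finset.card_le_sum_iff_forall_eq_one {f : ι → ℝ} (hf : ∀ i ∈ s, f i ≤ 1) :
    (#s : ℝ) ≤ ∑ i ∈ s, f i ↔ ∀ i ∈ s, f i = 1 := by
  have hgap : ∑ i ∈ s, (1 - f i) = #s - ∑ i ∈ s, f i := by simp [sum_sub_distrib]
  have hgap₀ : ∀ i ∈ s, 0 ≤ 1 - f i := fun i hi => sub_nonneg.2 (hf i hi)
  rw [← sub_nonpos, ← hgap, (sum_nonneg hgap₀).ge_iff_eq, eq_comm, sum_eq_zero_iff_of_nonneg hgap₀]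
  exact forall₂_congr fun i _ => by constructor <;> intro h <;> linarith

theorem le_sum_add_mean_iff (hs : s.Nonempty) {a b : ι → ℝ} {x : ℝ}
    (ha : ∀ i ∈ s, a i = 0 ∨ a i = 1) (hb : ∀ i ∈ s, b i = 0 ∨ b i = 1) (hx : x = 0 ∨ x = 1) :
    x ≤ ∑ i ∈ s, b i + (∑ i ∈ s, a i) / #s ↔
      (x = 1 → (∃ i ∈ s, b i = 1) ∨ ∀ i ∈ s, a i = 1) := by
  have hcard : (0 : ℝ) < #s := by exact_mod_cast hs.card_pos
  have hb₀ : 0 ≤ ∑ i ∈ s, b i :=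
    sum_nonneg fun i hi => by rcases hb i hi with h | h <;> simp [h]
  have ha₀ : 0 ≤ (∑ i ∈ s, a i) / #s :=
    div_nonneg (sum_nonneg fun i hi => by rcases ha i hi with h | h <;> simp [h]) hcard.le
  have ha₁ : ∀ i ∈ s, a i ≤ 1 := fun i hi => by rcases ha i hi with h | h <;> simp [h]
  rcases hx with rfl | rfl
  · simpa using add_nonneg hb₀ ha₀
  simp only [forall_const]
  by_cases hB : ∃ i ∈ s, b i = 1
  · simp only [hB, true_or, iff_true]
    linarith [(one_le_sum_iff_exists_eq_one hb).2 hB]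
  · have hB₀ : ∑ i ∈ s, b i = 0 :=
      sum_eq_zero fun i hi => (hb i hi).resolve_right fun h => hB ⟨i, hi, h⟩
    rw [hB₀, zero_add, one_le_div hcard, card_le_sum_iff_forall_eq_one ha₁]
    simp only [hB, false_or]

end BinarySums

theorem exists_until_iff {n : ℕ} (p q : Fin (n + 1) → Prop) :
    ((∀ k : Fin n, q k.succ → (∃ j ≤ k.castSucc, q j) ∨ ∀ j ≤ k.castSucc, p j) ∧ ∃ j, q j) ↔
      ∃ t, q t ∧ ∀ t' < t, p t' := by
  constructor
  · rintro ⟨hstep, hq⟩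
    obtain ⟨t, hqt, hmin⟩ := wellFounded_lt.has_min {j | q j} hq
    refine ⟨t, hqt, ?_⟩
    rcases Fin.eq_zero_or_eq_succ t with rfl | ⟨k, rfl⟩
    · exact fun t' ht' => absurd ht' (Fin.not_lt_zero t')
    rcases hstep k hqt with ⟨j, hj, hqj⟩ | hp
    · exact absurd (Fin.le_castSucc_iff.1 hj) (hmin j hqj)
    · exact fun t' ht' => hp t' (Fin.le_castSucc_iff.2 ht')
  · rintro ⟨t, hqt, hp⟩
    refine ⟨fun k _ => ?_, t, hqt⟩
    rcases le_or_gt t k.castSucc with ht | ht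
    · exact .inl ⟨t, ht, hqt⟩
    · exact .inr fun j hj => hp j (hj.trans_lt ht)

section UntilMatrices

noncomputable def untilL₁ (τ : ℕ) : Matrix (Fin τ) (Fin τ) ℝ :=
  of fun i j => if (i : ℕ) < τ - 1 ∧ (j : ℕ) ≤ (i : ℕ) then -1 / ((i : ℕ) + 1 : ℝ) else 0

noncomputable def untilL₂ (τ : ℕ) : Matrix (Fin τ) (Fin τ) ℝ :=
  of fun i j => if (j : ℕ) ≤ (i : ℕ) then -1 else if (j : ℕ) = (i : ℕ) + 1 then 1 else 0

variable {n : ℕ}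

theorem untilL₁_mulVec_castSucc (a : Fin (n + 1) → ℝ) (k : Fin n) :
    (untilL₁ (n + 1) *ᵥ a) k.castSucc = -(∑ j ∈ Iic k.castSucc, a j) / #(Iic k.castSucc) := by
  simp [untilL₁, mulVec, dotProduct, ite_mul, ← sum_filter, filter_ge_eq_Iic, div_eq_inv_mul,
    mul_sum]

theorem untilL₁_mulVec_last (a : Fin (n + 1) → ℝ) : (untilL₁ (n + 1) *ᵥ a) (Fin.last n) = 0 := by
  simp [untilL₁, mulVec, dotProduct]

theorem untilL₂_mulVec_castSucc (b : Fin (n + 1) → ℝ) (k : Fin n) :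
    (untilL₂ (n + 1) *ᵥ b) k.castSucc = b k.succ - ∑ j ∈ Iic k.castSucc, b j := by
  have hrow (j : Fin (n + 1)) : untilL₂ (n + 1) k.castSucc j =
      (if j ≤ k.castSucc then -1 else 0) + if j = k.succ then 1 else 0 := by
    rcases le_or_gt j k.castSucc with hj | hj
    · have : j ≠ k.succ := (hj.trans_lt Fin.castSucc_lt_succ).ne
      simp [untilL₂, hj, this]
    · simp [untilL₂, hj.not_ge, Fin.ext_iff]
  simp [mulVec, dotProduct, hrow, add_mul, ite_mul, sum_add_distrib, ← sum_filter,
    filter_ge_eq_Iic, sub_eq_neg_add]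

theorem untilL₂_mulVec_last (b : Fin (n + 1) → ℝ) :
    (untilL₂ (n + 1) *ᵥ b) (Fin.last n) = -∑ j, b j := by
  simp [untilL₂, mulVec, dotProduct, Fin.le_last]

end UntilMatrices

/-- The H-rep polytope `H_U = {v ∈ ℝ^{2τ} : [L₁ L₂] v ≤ (0, …, 0, -1)ᵀ}` exactly
captures satisfaction of the "until" operator over a window of `τ` steps: for
binary indicator sequences `a, b : Fin τ → ℝ` (0-based indexing of the window
`{1, …, τ}`), the stacked vector `(a, b)` (represented as `Sum.elim a b`) lies
in `H_U` iff there is a step `t` with `b t = 1` and `a t' = 1` for all `t' < t`. -/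
theorem until_hrep_feasible_space (τ : ℕ) (hτ : 1 ≤ τ) (a b : Fin τ → ℝ)
    (ha : ∀ j, a j = 0 ∨ a j = 1) (hb : ∀ j, b j = 0 ∨ b j = 1)
    (L₁ L₂ : Matrix (Fin τ) (Fin τ) ℝ)
    (hL₁ : ∀ i j : Fin τ, L₁ i j =
      if (i : ℕ) < τ - 1 ∧ (j : ℕ) ≤ (i : ℕ) then -1 / ((i : ℕ) + 1 : ℝ) else 0)
    (hL₂ : ∀ i j : Fin τ, L₂ i j =
      if (j : ℕ) ≤ (i : ℕ) then -1 else if (j : ℕ) = (i : ℕ) + 1 then 1 else 0)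
    (r : Fin τ → ℝ) (hr : ∀ i : Fin τ, r i = if (i : ℕ) < τ - 1 then 0 else -1)
    (HU : Set (Fin τ ⊕ Fin τ → ℝ))
    (hHU : HU = {v | ∀ i : Fin τ, (Matrix.fromCols L₁ L₂).mulVec v i ≤ r i}) :
    Sum.elim a b ∈ HU ↔
      ∃ t : Fin τ, b t = 1 ∧ ∀ t' : Fin τ, t' < t → a t' = 1 := by
  obtain ⟨n, rfl⟩ := Nat.exists_eq_add_of_le' hτ
  obtain rfl : L₁ = untilL₁ (n + 1) := Matrix.ext hL₁
  obtain rfl : L₂ = untilL₂ (n + 1) := Matrix.ext hL₂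
  subst hHU
  simp only [Set.mem_ofPred_eq, fromCols_mulVec_sumElim, Pi.add_apply]
  rw [Fin.forall_fin_succ', ← exists_until_iff]
  refine and_congr (forall_congr' fun k => ?_) ?_
  · have hrow := le_sum_add_mean_iff (nonempty_Iic (a := k.castSucc))
      (fun i _ => ha i) (fun i _ => hb i) (hb k.succ)
    simp only [mem_Iic] at hrow
    rw [untilL₁_mulVec_castSucc, untilL₂_mulVec_castSucc, hr, if_pos (by simp), ← hrow, neg_div]
    constructor <;> intro h <;> linarith
  · have hlast := one_le_sum_iff_exists_eq_one (s := univ) fun i _ => hb i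
    simp only [mem_univ, true_and] at hlast
    rw [untilL₁_mulVec_last, untilL₂_mulVec_last, hr, if_neg (by simp), ← hlast]
    constructor <;> intro h <;> linarith
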